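/- For every even natural number n ≥ 2, the abelian group presented by the 2×2 integer relation matrix [[F_{2n}, F_{2n-1} - 1], [F_{2n+1} - 1, F_{2n}]] is isomorphic to ℤ_{5F_n} ⊕ ℤ_{F_n}. -/
import Mathlib

private lemma cassini (k : ℕ) :
    (Nat.fib (k+1) : ℤ)^2 - Nat.fib k * Nat.fib (k+2) = (-1)^k := by
  induction k with
  | zero => simp
  | succ k ih =>
    have h : (Nat.fib (k+3) : ℤ) = Nat.fib (k+1) + Nat.fib (k+2) := by
      exact_mod_cast congrArg (Nat.cast (R := ℤ)) (Nat.fib_add_two (n := k+1))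
    have h2 : (Nat.fib (k+2) : ℤ) = Nat.fib k + Nat.fib (k+1) := by
      exact_mod_cast congrArg (Nat.cast (R := ℤ)) (Nat.fib_add_two (n := k))
    show (Nat.fib (k+2) : ℤ)^2 - Nat.fib (k+1) * Nat.fib (k+3) = (-1)^(k+1)
    rw [pow_succ]
    linear_combination (-1 : ℤ) * ih - (Nat.fib (k+1) : ℤ) * h + (Nat.fib (k+2) : ℤ) * h2

theorem col_red_even (n : ℕ) (hn : 2 ≤ n) (heven : Even n) :
    Nonempty
      (((ℤ × ℤ) ⧸ Submodule.span ℤ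
          ({((Nat.fib (2 * n) : ℤ), (Nat.fib (2 * n - 1) : ℤ) - 1),
            ((Nat.fib (2 * n + 1) : ℤ) - 1, (Nat.fib (2 * n) : ℤ))} : Set (ℤ × ℤ))) ≃+
        (ZMod (5 * Nat.fib n) × ZMod (Nat.fib n))) := by
  obtain ⟨m, rfl⟩ : ∃ m, n = m + 2 := ⟨n - 2, by omega⟩
  have hm : Even m := by
    rcases heven with ⟨t, ht⟩
    exact ⟨t - 1, by omega⟩
  -- integer fib values
  set x : ℤ := (Nat.fib m : ℤ) with hxdef
  set y : ℤ := (Nat.fib (m+1) : ℤ) with hydef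
  have fib_cast : ∀ k : ℕ, (Nat.fib (k+2) : ℤ) = Nat.fib k + Nat.fib (k+1) := by
    intro k; exact_mod_cast congrArg (Nat.cast (R := ℤ)) (Nat.fib_add_two (n := k))
  have h2 : (Nat.fib (m+2) : ℤ) = x + y := fib_cast m
  have h3 : (Nat.fib (m+3) : ℤ) = x + 2*y := by rw [fib_cast (m+1), h2]; ring
  have h4 : (Nat.fib (m+4) : ℤ) = 2*x + 3*y := by rw [fib_cast (m+2), h2, h3]; ring
  have hcas : y^2 - x*y - x^2 = 1 := by
    have := cassini m
    rw [h2, hm.neg_one_pow] at this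
    linarith [this]
  -- the three fib values appearing in the matrix
  have hA : (Nat.fib (2*(m+2)) : ℤ) = (x+y) * (x+3*y) := by
    have : 2*(m+2) = (m+1) + (m+2) + 1 := by omega
    rw [this, Nat.fib_add]
    push_cast
    rw [h2, h3]
    ring
  have hB : (Nat.fib (2*(m+2) - 1) : ℤ) = y^2 + (x+y)^2 := by
    have : 2*(m+2) - 1 = (m+1) + (m+1) + 1 := by omega
    rw [this, Nat.fib_add]
    push_cast
    rw [h2]
    ring
  have hC : (Nat.fib (2*(m+2) + 1) : ℤ) = (x+y)^2 + (x+2*y)^2 := by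
    have : 2*(m+2) + 1 = (m+2) + (m+2) + 1 := by omega
    rw [this, Nat.fib_add]
    push_cast
    rw [h2, h3]
    ring
  set N : ℕ := Nat.fib (m+2) with hNdef
  have hN : (N : ℤ) = x + y := h2
  -- the linear map
  set g1 : ℤ × ℤ := ((Nat.fib (2 * (m+2)) : ℤ), (Nat.fib (2 * (m+2) - 1) : ℤ) - 1) with hg1
  set g2 : ℤ × ℤ := ((Nat.fib (2 * (m+2) + 1) : ℤ) - 1, (Nat.fib (2 * (m+2)) : ℤ)) with hg2
  let φ₀ : (ℤ × ℤ) →+ ZMod (5 * N) × ZMod N :=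
    { toFun := fun p => (((p.2 - 2 * p.1 : ℤ) : ZMod (5 * N)), ((p.1 : ℤ) : ZMod N))
      map_zero' := by simp
      map_add' := by
        intro a b
        simp only [Prod.fst_add, Prod.snd_add, Prod.mk_add_mk, Prod.mk.injEq]
        constructor <;> push_cast <;> ring }
  let φ : (ℤ × ℤ) →ₗ[ℤ] ZMod (5 * N) × ZMod N := φ₀.toIntLinearMap
  have hφ : ∀ p : ℤ × ℤ, φ p = (((p.2 - 2 * p.1 : ℤ) : ZMod (5 * N)), ((p.1 : ℤ) : ZMod N)) :=
    fun _ => rfl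
  have hsurj : Function.Surjective φ := by
    intro q
    obtain ⟨b, hb⟩ := ZMod.intCast_surjective (n := N) q.2
    obtain ⟨a, ha⟩ := ZMod.intCast_surjective (n := 5 * N) q.1
    refine ⟨(b, a + 2 * b), ?_⟩
    rw [hφ]
    simp only
    ext
    · simp only [add_sub_cancel_right] at *
      simpa using ha
    · simpa using hb
  have hg1mem : g1 ∈ ({g1, g2} : Set (ℤ × ℤ)) := Set.mem_insert _ _
  have hg2mem : g2 ∈ ({g1, g2} : Set (ℤ × ℤ)) := Set.mem_insert_of_mem _ rfl
  have hker : Submodule.span ℤ ({g1, g2} : Set (ℤ × ℤ)) = LinearMap.ker φ := by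
    apply le_antisymm
    · rw [Submodule.span_le]
      rintro p (rfl | rfl)
      · rw [SetLike.mem_coe, LinearMap.mem_ker, hφ, hg1]
        simp only
        have d1 : ((5 * N : ℕ) : ℤ) ∣ ((Nat.fib (2*(m+2) - 1) : ℤ) - 1 - 2 * (Nat.fib (2*(m+2)) : ℤ)) := by
          refine ⟨-y, ?_⟩
          push_cast
          rw [hA, hB, hN]
          linear_combination hcas
        have d2 : ((N : ℕ) : ℤ) ∣ (Nat.fib (2*(m+2)) : ℤ) := by
          refine ⟨x + 3*y, ?_⟩
          rw [hA, hN]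
        ext
        · simpa using (ZMod.intCast_zmod_eq_zero_iff_dvd _ _).2 d1
        · simpa using (ZMod.intCast_zmod_eq_zero_iff_dvd _ _).2 d2
      · rw [SetLike.mem_coe, LinearMap.mem_ker, hφ, hg2]
        simp only
        have d1 : ((5 * N : ℕ) : ℤ) ∣ ((Nat.fib (2*(m+2)) : ℤ) - 2 * ((Nat.fib (2*(m+2)+1) : ℤ) - 1)) := by
          refine ⟨-(x+y), ?_⟩
          push_cast
          rw [hA, hC, hN]
          linear_combination (-2 : ℤ) * hcas
        have d2 : ((N : ℕ) : ℤ) ∣ ((Nat.fib (2*(m+2)+1) : ℤ) - 1) := by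
          refine ⟨3*x + 4*y, ?_⟩
          rw [hC, hN]
          linear_combination hcas
        ext
        · simpa using (ZMod.intCast_zmod_eq_zero_iff_dvd _ _).2 d1
        · simpa using (ZMod.intCast_zmod_eq_zero_iff_dvd _ _).2 d2
    · intro p hp
      rw [LinearMap.mem_ker, hφ, Prod.mk_eq_zero] at hp
      obtain ⟨hp1, hp2⟩ := hp
      have d1 : ((5 * N : ℕ) : ℤ) ∣ (p.2 - 2 * p.1) := (ZMod.intCast_zmod_eq_zero_iff_dvd _ _).1 hp1
      have d2 : ((N : ℕ) : ℤ) ∣ p.1 := (ZMod.intCast_zmod_eq_zero_iff_dvd _ _).1 hp2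
      obtain ⟨t, ht⟩ := d1
      obtain ⟨s, hs⟩ := d2
      have hv1 : ((N : ℤ), 2 * (N : ℤ)) ∈ Submodule.span ℤ ({g1, g2} : Set (ℤ × ℤ)) := by
        have heq : ((N : ℤ), 2 * (N : ℤ)) = (-(x+y)) • g1 + y • g2 := by
          rw [hg1, hg2, Prod.smul_mk, Prod.smul_mk, Prod.mk_add_mk]
          rw [Prod.mk.injEq]
          constructor
          · rw [smul_eq_mul, smul_eq_mul, hA, hC, hN]
            linear_combination (-(x + 2*y)) * hcas
          · rw [smul_eq_mul, smul_eq_mul, hA, hB, hN]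
            linear_combination (-(x+y)) * hcas
        rw [heq]
        exact Submodule.add_mem _
          (Submodule.smul_mem _ _ (Submodule.subset_span hg1mem))
          (Submodule.smul_mem _ _ (Submodule.subset_span hg2mem))
      have hv2 : ((0 : ℤ), 5 * (N : ℤ)) ∈ Submodule.span ℤ ({g1, g2} : Set (ℤ × ℤ)) := by
        have heq : ((0 : ℤ), 5 * (N : ℤ)) = (-(3*x+4*y)) • g1 + (x+3*y) • g2 := by
          rw [hg1, hg2, Prod.smul_mk, Prod.smul_mk, Prod.mk_add_mk]
          rw [Prod.mk.injEq]
          constructor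
          · rw [smul_eq_mul, smul_eq_mul, hA, hC]
            linear_combination (-(x + 3*y)) * hcas
          · rw [smul_eq_mul, smul_eq_mul, hA, hB, hN]
            linear_combination (-(2*x+y)) * hcas
        rw [heq]
        exact Submodule.add_mem _
          (Submodule.smul_mem _ _ (Submodule.subset_span hg1mem))
          (Submodule.smul_mem _ _ (Submodule.subset_span hg2mem))
      have hpeq : p = s • ((N : ℤ), 2 * (N : ℤ)) + t • ((0 : ℤ), 5 * (N : ℤ)) := by
        rw [Prod.smul_mk, Prod.smul_mk, Prod.mk_add_mk]
        have : p = (p.1, p.2) := rfl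
        rw [this, Prod.mk.injEq]
        push_cast at ht hs
        constructor
        · rw [smul_eq_mul, smul_eq_mul]; linarith
        · rw [smul_eq_mul, smul_eq_mul]; linarith
      rw [hpeq]
      exact Submodule.add_mem _ (Submodule.smul_mem _ _ hv1) (Submodule.smul_mem _ _ hv2)
  exact ⟨((Submodule.quotEquivOfEq _ _ hker).trans
    (φ.quotKerEquivOfSurjective hsurj)).toAddEquiv⟩
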